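/- arXiv:1408.0557 — 5 statements merged into one kernel-verified Lean document; each statement's English description precedes it below -/
import Mathlib

section
/- Let G be a finite connected multigraph, T a finite multiset of spanning trees of G, and P a partition of the vertex set of G into at least two nonempty parts. Define the relative load ℓ^T(e) of an edge e as (number of trees of T containing e) / |T|, the packing value pack_val(T) = 1 / max_{e∈E} ℓ^T(e), and the partition value part_val(P) = |E(G/P)| / (|P| − 1), where E(G/P) is the set of edges of G with endpoints in different parts of P. Then pack_val(T) ≤ part_val(P). -/
open Finset MeasureTheory ProbabilityTheory
open scoped Classical

variable {V E : Type*}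

/-- Edge `e` joins `a` and `b` (in either direction). -/
def touches (ends : E → V × V) (e : E) (a b : V) : Prop :=
  ends e = (a, b) ∨ ends e = (b, a)

/-- `a` and `b` are connected using edges from `F`. -/
def EdgeConn (ends : E → V × V) (F : Set E) (a b : V) : Prop :=
  Relation.ReflTransGen (fun x y => ∃ e ∈ F, touches ends e x y) a b

/-- The multigraph is connected. -/
def GConn [Fintype V] (ends : E → V × V) : Prop :=
  ∀ a b : V, EdgeConn ends Set.univ a b

/-- `T` is a spanning tree: it connects all vertices and has `|V| - 1` edges. -/
def IsSpanningTree [Fintype V] (ends : E → V × V) (T : Finset E) : Prop :=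
  (∀ a b : V, EdgeConn ends (↑T) a b) ∧ T.card = Fintype.card V - 1

/-- Relative load of edge `e` w.r.t. a multiset of (spanning trees given as edge sets). -/
noncomputable def relLoad (𝒯 : Multiset (Finset E)) (e : E) : ℝ :=
  (𝒯.countP (fun T => e ∈ T) : ℝ) / (Multiset.card 𝒯 : ℝ)

/-- Maximum relative load over all edges. -/
noncomputable def maxLoad [Fintype E] [Nonempty E] (𝒯 : Multiset (Finset E)) : ℝ :=
  Finset.univ.sup' Finset.univ_nonempty (relLoad 𝒯)

/-- Packing value of a tree packing. -/
noncomputable def packVal [Fintype E] [Nonempty E] (𝒯 : Multiset (Finset E)) : ℝ :=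
  1 / maxLoad 𝒯

/-- `P` is a partition of the vertex set into nonempty parts. -/
def IsPartition [Fintype V] (P : Finset (Finset V)) : Prop :=
  (∀ S ∈ P, S.Nonempty) ∧ ∀ v : V, ∃! S, S ∈ P ∧ v ∈ S

/-- Edge `e` crosses between distinct parts of the partition `P`. -/
def crossesP (ends : E → V × V) (P : Finset (Finset V)) (e : E) : Prop :=
  ∀ S ∈ P, ¬((ends e).1 ∈ S ∧ (ends e).2 ∈ S)

/-- Edges of `G/P`, i.e. edges crossing between distinct parts of `P`. -/
noncomputable def crossEdgesP [Fintype E] (ends : E → V × V) (P : Finset (Finset V)) : Finset E :=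
  Finset.univ.filter (crossesP ends P)

/-- Partition value `|E(G/P)| / (|P| - 1)`. -/
noncomputable def partVal [Fintype V] [Fintype E] (ends : E → V × V) (P : Finset (Finset V)) : ℝ :=
  ((crossEdgesP ends P).card : ℝ) / ((P.card : ℝ) - 1)

/-- Edge `e` crosses the cut `(S, V \ S)`. -/
def crossesC (ends : E → V × V) (S : Finset V) (e : E) : Prop :=
  ((ends e).1 ∈ S) ≠ ((ends e).2 ∈ S)

/-- The edges crossing the cut `(S, V \ S)`. -/
noncomputable def cutEdges [Fintype V] [Fintype E] (ends : E → V × V) (S : Finset V) : Finset E :=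
  Finset.univ.filter (crossesC ends S)

/-- Weight of the cut `(S, V \ S)` (number of crossing edges). -/
noncomputable def cutW [Fintype V] [Fintype E] (ends : E → V × V) (S : Finset V) : ℕ :=
  (cutEdges ends S).card

/-- `lam` is the minimum cut value of the multigraph. -/
def IsMinCutVal [Fintype V] [Fintype E] (ends : E → V × V) (lam : ℕ) : Prop :=
  (∃ S : Finset V, S.Nonempty ∧ S ≠ Finset.univ ∧ cutW ends S = lam) ∧
    ∀ S : Finset V, S.Nonempty → S ≠ Finset.univ → lam ≤ cutW ends S

/-- A rooted spanning tree given by a parent map: the root is a fixed point, every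
vertex reaches the root by iterating `parent`, and every tree edge exists in `G`. -/
def IsRootedSpanningTree [Fintype V] (ends : E → V × V) (parent : V → V) (r : V) : Prop :=
  parent r = r ∧ (∀ v : V, ∃ k : ℕ, parent^[k] v = r) ∧
    ∀ v : V, v ≠ r → ∃ e : E, touches ends e v (parent v)

/-- The set `v↓` of descendants of `v` (including `v`). -/
noncomputable def desc [Fintype V] (parent : V → V) (v : V) : Finset V :=
  Finset.univ.filter (fun u => ∃ k : ℕ, parent^[k] u = v)

/-- Degree of `u` in the multigraph (loops count twice). -/
noncomputable def deg [Fintype E] (ends : E → V × V) (u : V) : ℕ :=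
  (Finset.univ.filter (fun e : E => (ends e).1 = u)).card +
  (Finset.univ.filter (fun e : E => (ends e).2 = u)).card

section Aux

variable [Fintype V]

/-- The part of `v` in the partition `P`. -/
noncomputable def myPart (P : Finset (Finset V)) (hP : IsPartition P) (v : V) : Finset V :=
  (hP.2 v).choose

lemma myPart_mem (P : Finset (Finset V)) (hP : IsPartition P) (v : V) :
    myPart P hP v ∈ P := ((hP.2 v).choose_spec.1).1

lemma mem_myPart (P : Finset (Finset V)) (hP : IsPartition P) (v : V) :
    v ∈ myPart P hP v := ((hP.2 v).choose_spec.1).2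

lemma myPart_unique (P : Finset (Finset V)) (hP : IsPartition P) {v : V} {S : Finset V}
    (hS : S ∈ P) (hv : v ∈ S) : S = myPart P hP v :=
  (hP.2 v).choose_spec.2 S ⟨hS, hv⟩

lemma crossesP_iff (ends : E → V × V) (P : Finset (Finset V)) (hP : IsPartition P) (e : E) :
    crossesP ends P e ↔ myPart P hP (ends e).1 ≠ myPart P hP (ends e).2 := by
  constructor
  · intro h heq
    exact h (myPart P hP (ends e).1) (myPart_mem P hP _)
      ⟨mem_myPart P hP _, heq ▸ mem_myPart P hP (ends e).2⟩
  · intro h S hS ⟨h1, h2⟩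
    exact h ((myPart_unique P hP hS h1).symm.trans (myPart_unique P hP hS h2))

lemma exists_cross_edge (ends : E → V × V) (F : Finset E) (P : Finset (Finset V))
    (hP : IsPartition P) {a b : V} (hc : EdgeConn ends (↑F) a b)
    (hab : myPart P hP a ≠ myPart P hP b) :
    ∃ e ∈ F, crossesP ends P e := by
  induction hc with
  | refl => exact absurd rfl hab
  | @tail c d hac hcd ih =>
    by_cases h : myPart P hP a = myPart P hP c
    · obtain ⟨e, heF, hed⟩ := hcd
      refine ⟨e, heF, (crossesP_iff ends P hP e).2 ?_⟩
      rcases hed with h' | h' <;> rw [h'] <;> simp only [ne_eq] <;> intro hq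
      · exact hab (h.trans hq)
      · exact hab (h.trans hq.symm)
    · exact ih h

/-- A connected graph crosses a partition with at least `|P| - 1` edges. -/
lemma cross_card_aux (ends : E → V × V) (F : Finset E)
    (hconn : ∀ a b : V, EdgeConn ends (↑F) a b) :
    ∀ n : ℕ, ∀ P : Finset (Finset V), IsPartition P → P.card = n →
      n - 1 ≤ (F.filter (crossesP ends P)).card := by
  intro n
  induction n using Nat.strong_induction_on with
  | _ n IH =>
    intro P hP hcard
    rcases Nat.lt_or_ge n 2 with hn | hn
    · omega
    · -- find a crossing edge
      have h2 : 1 < P.card := by omega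
      obtain ⟨S₁, hS₁, S₂, hS₂, hne⟩ := Finset.one_lt_card.1 h2
      obtain ⟨u, hu⟩ := hP.1 S₁ hS₁
      obtain ⟨v, hv⟩ := hP.1 S₂ hS₂
      have hpu : myPart P hP u = S₁ := (myPart_unique P hP hS₁ hu).symm
      have hpv : myPart P hP v = S₂ := (myPart_unique P hP hS₂ hv).symm
      obtain ⟨e, heF, hecross⟩ := exists_cross_edge ends F P hP (hconn u v)
        (by rw [hpu, hpv]; exact hne)
      -- merge the two parts of the endpoints of e
      set A := myPart P hP (ends e).1 with hA
      set B := myPart P hP (ends e).2 with hB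
      have hAB : A ≠ B := (crossesP_iff ends P hP e).1 hecross
      have hAP : A ∈ P := myPart_mem P hP _
      have hBP : B ∈ P := myPart_mem P hP _
      set P' : Finset (Finset V) := insert (A ∪ B) ((P.erase A).erase B) with hP'def
      have hABnotin : (A ∪ B) ∉ (P.erase A).erase B := by
        intro hmem
        have hmemP : (A ∪ B) ∈ P := Finset.mem_of_mem_erase (Finset.mem_of_mem_erase hmem)
        have h1 : (A ∪ B) = A := by
          have := myPart_unique P hP hmemP
            (S := A ∪ B) (v := (ends e).1) (Finset.mem_union_left _ (mem_myPart P hP _))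
          exact this
        have hBe : (ends e).2 ∈ A := by
          rw [← h1]; exact Finset.mem_union_right _ (mem_myPart P hP _)
        exact hAB (myPart_unique P hP hAP hBe)
      -- P' is a partition
      have hP'part : IsPartition P' := by
        constructor
        · intro S hS
          rcases Finset.mem_insert.1 hS with h | h
          · obtain ⟨x, hx⟩ := hP.1 A hAP
            exact ⟨x, h ▸ Finset.mem_union_left _ hx⟩
          · exact hP.1 S (Finset.mem_of_mem_erase (Finset.mem_of_mem_erase h))
        · intro w
          by_cases hw : myPart P hP w = A ∨ myPart P hP w = B
          · refine ⟨A ∪ B, ⟨Finset.mem_insert_self _ _, ?_⟩, ?_⟩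
            · rcases hw with h | h
              · exact Finset.mem_union_left _ (h ▸ mem_myPart P hP w)
              · exact Finset.mem_union_right _ (h ▸ mem_myPart P hP w)
            · rintro S ⟨hS, hwS⟩
              rcases Finset.mem_insert.1 hS with h | h
              · exact h
              · exfalso
                have hSP : S ∈ P := Finset.mem_of_mem_erase (Finset.mem_of_mem_erase h)
                have : S = myPart P hP w := myPart_unique P hP hSP hwS
                rcases hw with h' | h'
                · exact (Finset.ne_of_mem_erase (Finset.mem_of_mem_erase h))
                    (this.trans h')
                · exact (Finset.ne_of_mem_erase h) (this.trans h')
          · push_neg at hw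
            refine ⟨myPart P hP w, ⟨Finset.mem_insert_of_mem
              (Finset.mem_erase.2 ⟨hw.2, Finset.mem_erase.2 ⟨hw.1, myPart_mem P hP w⟩⟩),
              mem_myPart P hP w⟩, ?_⟩
            rintro S ⟨hS, hwS⟩
            rcases Finset.mem_insert.1 hS with h | h
            · exfalso
              subst h
              rcases Finset.mem_union.1 hwS with h' | h'
              · exact hw.1 (myPart_unique P hP hAP h').symm
              · exact hw.2 (myPart_unique P hP hBP h').symm
            · exact myPart_unique P hP (Finset.mem_of_mem_erase (Finset.mem_of_mem_erase h)) hwS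
      -- card of P'
      have hBerase : B ∈ P.erase A := Finset.mem_erase.2 ⟨fun h => hAB h.symm, hBP⟩
      have hP'card : P'.card = n - 1 := by
        rw [hP'def, Finset.card_insert_of_notMem hABnotin,
          Finset.card_erase_of_mem hBerase, Finset.card_erase_of_mem hAP, hcard]
        omega
      -- crossing edges of P' are crossing edges of P, minus e
      have hsub : F.filter (crossesP ends P') ⊆ (F.filter (crossesP ends P)).erase e := by
        intro f hf
        obtain ⟨hfF, hfc⟩ := Finset.mem_filter.1 hf
        refine Finset.mem_erase.2 ⟨?_, Finset.mem_filter.2 ⟨hfF, ?_⟩⟩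
        · rintro rfl
          exact hfc (A ∪ B) (Finset.mem_insert_self _ _)
            ⟨Finset.mem_union_left _ (mem_myPart P hP _),
             Finset.mem_union_right _ (mem_myPart P hP _)⟩
        · intro S hS ⟨h1, h2⟩
          by_cases hSAB : S = A ∨ S = B
          · exact hfc (A ∪ B) (Finset.mem_insert_self _ _)
              ⟨by rcases hSAB with h | h <;> subst h
                  exacts [Finset.mem_union_left _ h1, Finset.mem_union_right _ h1],
               by rcases hSAB with h | h <;> subst h
                  exacts [Finset.mem_union_left _ h2, Finset.mem_union_right _ h2]⟩
          · push_neg at hSAB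
            exact hfc S (Finset.mem_insert_of_mem
              (Finset.mem_erase.2 ⟨hSAB.2, Finset.mem_erase.2 ⟨hSAB.1, hS⟩⟩)) ⟨h1, h2⟩
      have hein : e ∈ F.filter (crossesP ends P) := Finset.mem_filter.2 ⟨heF, hecross⟩
      have hIH := IH (n - 1) (by omega) P' hP'part hP'card
      have hle : (F.filter (crossesP ends P')).card ≤
          (F.filter (crossesP ends P)).card - 1 := by
        calc (F.filter (crossesP ends P')).card
            ≤ ((F.filter (crossesP ends P)).erase e).card := Finset.card_le_card hsub
          _ = (F.filter (crossesP ends P)).card - 1 := Finset.card_erase_of_mem hein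
      have hpos : 1 ≤ (F.filter (crossesP ends P)).card := Finset.card_pos.2 ⟨e, hein⟩
      omega

end Aux

/-- weak duality `pack_val(T) ≤ part_val(P)`. -/
theorem stmt1 [Fintype V] [Fintype E] [Nonempty E] (ends : E → V × V)
    (hG : GConn ends) (hV : 2 ≤ Fintype.card V)
    (𝒯 : Multiset (Finset E)) (h𝒯 : 𝒯 ≠ 0)
    (htree : ∀ T ∈ 𝒯, IsSpanningTree ends T)
    (hpos : 0 < maxLoad 𝒯)
    (P : Finset (Finset V)) (hP : IsPartition P) (hP2 : 2 ≤ P.card) :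
    packVal 𝒯 ≤ partVal ends P := by
  set C := crossEdgesP ends P with hC
  -- natural number counting: total load on crossing edges
  have hswap : ∀ 𝒮 : Multiset (Finset E),
      (∑ e ∈ C, 𝒮.countP (fun T => e ∈ T)) =
        (𝒮.map (fun T => (C.filter (fun e => e ∈ T)).card)).sum := by
    intro 𝒮
    induction 𝒮 using Multiset.induction_on with
    | empty => simp
    | cons a s ih =>
      simp only [Multiset.countP_cons, Multiset.map_cons, Multiset.sum_cons,
        Finset.sum_add_distrib, ih]
      rw [add_comm]
      congr 1
      rw [Finset.card_filter]
  -- each tree contains at least |P| - 1 crossing edges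
  have htreecount : ∀ T ∈ 𝒯, P.card - 1 ≤ (C.filter (fun e => e ∈ T)).card := by
    intro T hT
    have hfil : C.filter (fun e => e ∈ T) = T.filter (crossesP ends P) := by
      ext f
      simp only [hC, crossEdgesP, Finset.mem_filter, Finset.mem_univ, true_and]
      tauto
    rw [hfil]
    exact cross_card_aux ends T (htree T hT).1 P.card P hP rfl
  have hsum : Multiset.card 𝒯 * (P.card - 1) ≤ ∑ e ∈ C, 𝒯.countP (fun T => e ∈ T) := by
    rw [hswap]
    calc Multiset.card 𝒯 * (P.card - 1)
        = (𝒯.map (fun _ => P.card - 1)).sum := by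
          simp [Multiset.map_const', Multiset.sum_replicate, mul_comm]
      _ ≤ (𝒯.map (fun T => (C.filter (fun e => e ∈ T)).card)).sum :=
          Multiset.sum_map_le_sum_map _ _ htreecount
  -- pass to reals
  have hcard𝒯 : 0 < (Multiset.card 𝒯 : ℝ) := by
    have := Multiset.card_pos.2 h𝒯
    exact_mod_cast this
  have hload_le : ∀ e : E, relLoad 𝒯 e ≤ maxLoad 𝒯 := fun e =>
    Finset.le_sup' (relLoad 𝒯) (Finset.mem_univ e)
  have hsumR : ((P.card : ℝ) - 1) ≤ ∑ e ∈ C, relLoad 𝒯 e := by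
    have h1 : ∑ e ∈ C, relLoad 𝒯 e =
        (∑ e ∈ C, (𝒯.countP (fun T => e ∈ T) : ℝ)) / (Multiset.card 𝒯 : ℝ) := by
      rw [Finset.sum_div]; rfl
    rw [h1, le_div_iff₀ hcard𝒯]
    have : ((Multiset.card 𝒯 * (P.card - 1) : ℕ) : ℝ) ≤
        ∑ e ∈ C, ((𝒯.countP (fun T => e ∈ T) : ℕ) : ℝ) := by
      rw [← Nat.cast_sum]
      exact_mod_cast hsum
    calc ((P.card : ℝ) - 1) * (Multiset.card 𝒯 : ℝ)
        = ((Multiset.card 𝒯 * (P.card - 1) : ℕ) : ℝ) := by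
          push_cast [Nat.cast_sub (by omega : 1 ≤ P.card)]
          ring
      _ ≤ _ := this
  have hkey : ((P.card : ℝ) - 1) ≤ (C.card : ℝ) * maxLoad 𝒯 := by
    calc ((P.card : ℝ) - 1) ≤ ∑ e ∈ C, relLoad 𝒯 e := hsumR
      _ ≤ ∑ _e ∈ C, maxLoad 𝒯 := Finset.sum_le_sum (fun e _ => hload_le e)
      _ = (C.card : ℝ) * maxLoad 𝒯 := by rw [Finset.sum_const, nsmul_eq_mul]
  have hPpos : (0 : ℝ) < (P.card : ℝ) - 1 := by
    have : (2 : ℝ) ≤ (P.card : ℝ) := by exact_mod_cast hP2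
    linarith
  rw [packVal, partVal, div_le_div_iff₀ hpos hPpos, one_mul]
  exact hkey
end

section
/- Let G = (V,E) be a finite connected multigraph with minimum cut value λ, and let T be a multiset of spanning trees such that for every edge e, |ℓ^T(e) − ℓ*(e)| ≤ ε/λ, where ℓ* denotes the ideal relative loads and 0 < ε < 2. Then λ ≤ (2+ε)·pack_val(T). Moreover, if there exists a minimum cut C such that every tree in T crosses C at least twice, then (2+ε)·pack_val(T) ≤ (1+ε/2)·λ. -/
open Finset MeasureTheory ProbabilityTheory
open scoped Classical

variable {V E : Type*}

/-- with loads `ε/λ`-close to the ideal loads (which are bounded by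
`1/Φ ≤ 2/λ`), we have `λ ≤ (2+ε)·pack_val(T)`; moreover, if some minimum cut is
crossed at least twice by every tree, then `(2+ε)·pack_val(T) ≤ (1+ε/2)·λ`. -/
theorem stmt4 [Fintype V] [Fintype E] [Nonempty E] (ends : E → V × V) (hG : GConn ends)
    (hV : 2 ≤ Fintype.card V)
    (lam : ℕ) (hlam : IsMinCutVal ends lam) (hlam0 : 0 < lam)
    (ε : ℝ) (hε0 : 0 < ε) (hε2 : ε < 2)
    (𝒯 : Multiset (Finset E)) (h𝒯 : 𝒯 ≠ 0) (htree : ∀ T ∈ 𝒯, IsSpanningTree ends T)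
    (ℓstar : E → ℝ) (hstar0 : ∀ e, 0 ≤ ℓstar e) (hstar2 : ∀ e, ℓstar e ≤ 2 / (lam : ℝ))
    (happrox : ∀ e, |relLoad 𝒯 e - ℓstar e| ≤ ε / (lam : ℝ)) :
    (lam : ℝ) ≤ (2 + ε) * packVal 𝒯 ∧
    ((∃ S : Finset V, S.Nonempty ∧ S ≠ Finset.univ ∧ cutW ends S = lam ∧
        ∀ T ∈ 𝒯, 2 ≤ (T.filter (crossesC ends S)).card) →
      (2 + ε) * packVal 𝒯 ≤ (1 + ε / 2) * (lam : ℝ)) := by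
  classical
  have hn : 0 < Multiset.card 𝒯 := Multiset.card_pos.mpr h𝒯
  have hnR : (0:ℝ) < (Multiset.card 𝒯 : ℝ) := by exact_mod_cast hn
  have hlamR : (0:ℝ) < (lam : ℝ) := by exact_mod_cast hlam0
  -- maxLoad positive
  obtain ⟨T0, hT0⟩ := Multiset.exists_mem_of_ne_zero h𝒯
  have hT0card := (htree T0 hT0).2
  have hT0ne : T0.Nonempty := by
    rw [← Finset.card_pos, hT0card]; omega
  obtain ⟨e0, he0⟩ := hT0ne
  have hcount0 : 0 < Multiset.countP (fun T => e0 ∈ T) 𝒯 :=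
    Multiset.countP_pos.mpr ⟨T0, hT0, he0⟩
  have hrel0 : 0 < relLoad 𝒯 e0 := by
    unfold relLoad
    apply div_pos _ hnR
    exact_mod_cast hcount0
  have hmax0 : 0 < maxLoad 𝒯 :=
    lt_of_lt_of_le hrel0 (Finset.le_sup' _ (Finset.mem_univ e0))
  constructor
  · -- first part
    have hmaxub : maxLoad 𝒯 ≤ (2 + ε) / (lam : ℝ) := by
      apply Finset.sup'_le
      intro e _
      have h1 := abs_le.mp (happrox e)
      have h2 := hstar2 e
      have : relLoad 𝒯 e ≤ 2 / (lam : ℝ) + ε / (lam : ℝ) := by linarith [h1.2]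
      calc relLoad 𝒯 e ≤ 2 / (lam : ℝ) + ε / (lam : ℝ) := this
        _ = (2 + ε) / (lam : ℝ) := by ring
    have hmul : (lam : ℝ) * maxLoad 𝒯 ≤ 2 + ε := by
      calc (lam : ℝ) * maxLoad 𝒯 ≤ (lam : ℝ) * ((2 + ε) / (lam : ℝ)) :=
            mul_le_mul_of_nonneg_left hmaxub hlamR.le
        _ = 2 + ε := by field_simp
    rw [packVal, mul_one_div]
    exact (le_div_iff₀ hmax0).mpr hmul
  · rintro ⟨S, hSne, hSuniv, hSw, hScross⟩
    set C := cutEdges ends S with hC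
    have hCcard : C.card = lam := hSw
    have hCne : C.Nonempty := by
      rw [← Finset.card_pos, hCcard]; exact hlam0
    -- sum identity
    have hsum : ∀ 𝒮 : Multiset (Finset E),
        ∑ e ∈ C, Multiset.countP (fun T => e ∈ T) 𝒮
          = (𝒮.map fun T => (C.filter (· ∈ T)).card).sum := by
      intro 𝒮
      induction 𝒮 using Multiset.induction with
      | empty => simp
      | cons a s ih =>
        simp only [Multiset.countP_cons, Multiset.map_cons, Multiset.sum_cons,
          Finset.sum_add_distrib, ih, Finset.sum_ite_eq]
        rw [Nat.add_comm]
        congr 1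
        rw [Finset.card_filter]
    -- each tree contributes at least 2
    have hsum2 : 2 * Multiset.card 𝒯 ≤
        ∑ e ∈ C, Multiset.countP (fun T => e ∈ T) 𝒯 := by
      rw [hsum]
      have h2 : ∀ T ∈ 𝒯, 2 ≤ (C.filter (· ∈ T)).card := by
        intro T hT
        have heq : C.filter (· ∈ T) = T.filter (crossesC ends S) := by
          ext e
          simp [hC, cutEdges, and_comm]
        rw [heq]; exact hScross T hT
      calc 2 * Multiset.card 𝒯 = ((𝒯.map fun _ => 2).sum) := by
            simp [Multiset.map_const', Multiset.sum_replicate, Nat.mul_comm]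
        _ ≤ (𝒯.map fun T => (C.filter (· ∈ T)).card).sum :=
            Multiset.sum_map_le_sum_map _ _ h2
    -- sum of relative loads over C is at least 2
    have hrelsum : (2 : ℝ) ≤ ∑ e ∈ C, relLoad 𝒯 e := by
      have : ∑ e ∈ C, relLoad 𝒯 e
          = (∑ e ∈ C, (Multiset.countP (fun T => e ∈ T) 𝒯 : ℝ)) / (Multiset.card 𝒯 : ℝ) := by
        rw [Finset.sum_div]; rfl
      rw [this]
      rw [le_div_iff₀ hnR]
      push_cast
      calc (2 : ℝ) * (Multiset.card 𝒯 : ℝ)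
          = ((2 * Multiset.card 𝒯 : ℕ) : ℝ) := by push_cast; ring
        _ ≤ ((∑ e ∈ C, Multiset.countP (fun T => e ∈ T) 𝒯 : ℕ) : ℝ) := by
            exact_mod_cast hsum2
        _ = ∑ e ∈ C, ((Multiset.countP (fun T => e ∈ T) 𝒯 : ℕ) : ℝ) := by push_cast; rfl
    -- so some edge in C has load at least 2/λ
    have hconst : ∑ _e ∈ C, (2 / (lam : ℝ)) ≤ ∑ e ∈ C, relLoad 𝒯 e := by
      rw [Finset.sum_const, hCcard, nsmul_eq_mul]
      calc (lam : ℝ) * (2 / (lam : ℝ)) = 2 := by field_simp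
        _ ≤ _ := hrelsum
    obtain ⟨e1, he1C, he1⟩ := Finset.exists_le_of_sum_le hCne hconst
    have hmaxlb : 2 / (lam : ℝ) ≤ maxLoad 𝒯 :=
      le_trans he1 (Finset.le_sup' _ (Finset.mem_univ e1))
    have hpack : packVal 𝒯 ≤ (lam : ℝ) / 2 := by
      rw [packVal]
      have h2l : (0:ℝ) < 2 / (lam : ℝ) := by positivity
      calc 1 / maxLoad 𝒯 ≤ 1 / (2 / (lam : ℝ)) :=
            one_div_le_one_div_of_le h2l hmaxlb
        _ = (lam : ℝ) / 2 := by field_simp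
    calc (2 + ε) * packVal 𝒯 ≤ (2 + ε) * ((lam : ℝ) / 2) := by
          apply mul_le_mul_of_nonneg_left hpack; linarith
      _ = (1 + ε / 2) * (lam : ℝ) := by ring
end

section
/- Let G be a finite connected multigraph, T a rooted spanning tree of G, and suppose a minimum cut C = (S, V∖S) of G satisfies |E(T) ∩ E(C)| = 1 (T crosses C exactly once). Then there exists a vertex v such that C equals the cut (v↓, V∖v↓) determined by the subtree of T rooted at v (up to swapping sides). Consequently, min_v w(C_v) = λ, where C_v = (v↓, V∖v↓) and λ is the minimum cut value. -/
open Finset MeasureTheory ProbabilityTheory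
open scoped Classical

variable {V E : Type*}

/-- If `v` lies on a cycle of `parent` and can reach the fixed point `r`, then `v = r`. -/
lemma cycle_root {parent : V → V} {r v : V} (hroot : parent r = r)
    {n j : ℕ} (hn : 1 ≤ n) (hcyc : parent^[n] v = v) (hj : parent^[j] v = r) : v = r := by
  have hiter : ∀ m : ℕ, parent^[m * n] v = v := by
    intro m
    induction m with
    | zero => simp
    | succ m ih =>
      have : (m + 1) * n = m * n + n := by ring
      rw [this, Function.iterate_add_apply, hcyc, ih]
  have hjle : j ≤ j * n := Nat.le_mul_of_pos_right j hn
  have h1 : parent^[j * n] v = r := by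
    have : j * n = (j * n - j) + j := by omega
    rw [this, Function.iterate_add_apply, hj, Function.iterate_fixed hroot]
  rw [hiter j] at h1
  exact h1

lemma switch_exists {S : Set V} {parent : V → V} {r : V} :
    ∀ (k : ℕ) (u : V), parent^[k] u = r → u ∈ S → r ∉ S →
      ∃ w, w ∈ S ∧ parent w ∉ S := by
  intro k
  induction k with
  | zero => intro u hk hu hr; rw [Function.iterate_zero_apply] at hk; subst hk; exact absurd hu hr
  | succ k ih =>
    intro u hk hu hr
    by_cases hpu : parent u ∈ S
    · exact ih (parent u) (by rwa [← Function.iterate_succ_apply]) hpu hr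
    · exact ⟨u, hu, hpu⟩

/-- if a minimum cut is crossed exactly once by a rooted spanning tree,
then it equals `(v↓, V∖v↓)` for some `v` (up to swapping sides), and hence
`min_{v ≠ r} w(C_v) = λ`. -/
theorem stmt8 [Fintype V] [Fintype E] (ends : E → V × V) (hG : GConn ends)
    (T : Finset E) (hT : IsSpanningTree ends T)
    (parent : V → V) (r : V) (hroot : parent r = r)
    (hreach : ∀ v : V, ∃ k : ℕ, parent^[k] v = r)
    (htreeEdge : ∀ v : V, v ≠ r → ∃ e ∈ T, touches ends e v (parent v))
    (lam : ℕ) (hlam : IsMinCutVal ends lam)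
    (S : Finset V) (hS1 : S.Nonempty) (hS2 : S ≠ Finset.univ) (hSmin : cutW ends S = lam)
    (h1 : (T.filter (crossesC ends S)).card = 1) :
    (∃ v : V, desc parent v = S ∨ desc parent v = Sᶜ) ∧
    (∃ v : V, v ≠ r ∧ cutW ends (desc parent v) = lam) ∧
    (∀ v : V, v ≠ r → lam ≤ cutW ends (desc parent v)) := by
  classical
  -- the unique crossing tree edge
  obtain ⟨e₀, he₀⟩ := Finset.card_eq_one.mp h1
  have hcross_unique : ∀ e ∈ T, crossesC ends S e → e = e₀ := by
    intro e heT hec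
    have : e ∈ T.filter (crossesC ends S) := Finset.mem_filter.mpr ⟨heT, hec⟩
    rw [he₀] at this; simpa using this
  -- existence of a switching vertex v ≠ r
  have hexists : ∃ v, v ≠ r ∧ ¬((v ∈ S) ↔ (parent v ∈ S)) := by
    by_cases hrS : r ∈ S
    · obtain ⟨b, hb⟩ : ∃ b, b ∉ S := by
        by_contra h
        push_neg at h
        exact hS2 (Finset.eq_univ_iff_forall.mpr h)
      obtain ⟨k, hk⟩ := hreach b
      obtain ⟨w, hw1, hw2⟩ := switch_exists (S := {x : V | x ∉ S}) k b hk hb (by simpa using hrS)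
      simp only [Set.mem_setOf_eq, not_not] at hw1 hw2
      refine ⟨w, fun h => hw1 (h ▸ hrS), fun h => hw1 (h.mpr hw2)⟩
    · obtain ⟨a, ha⟩ := hS1
      obtain ⟨k, hk⟩ := hreach a
      obtain ⟨w, hw1, hw2⟩ := switch_exists (S := {x : V | x ∈ S}) k a hk ha (by simpa using hrS)
      simp only [Set.mem_setOf_eq] at hw1 hw2
      refine ⟨w, fun h => hrS (h ▸ hw1), fun h => hw2 (h.mp hw1)⟩
  obtain ⟨v, hvr, hv⟩ := hexists
  obtain ⟨e_v, hevT, hev⟩ := htreeEdge v hvr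
  have hev_cross : crossesC ends S e_v := by
    rcases hev with h | h <;> simp only [crossesC, h, ne_eq, eq_iff_iff]
    · exact hv
    · exact fun h' => hv h'.symm
  have hev_eq : e_v = e₀ := hcross_unique e_v hevT hev_cross
  -- v is not on a parent-cycle
  have hnocyc : ∀ n : ℕ, 1 ≤ n → parent^[n] v ≠ v := by
    intro n hn hcy
    obtain ⟨j, hj⟩ := hreach v
    exact hvr (cycle_root hroot hn hcy hj)
  -- uniqueness: every other vertex keeps membership under parent
  have H : ∀ w : V, w ≠ v → ((w ∈ S) ↔ (parent w ∈ S)) := by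
    intro w hwv
    by_cases hwr : w = r
    · subst hwr; rw [hroot]
    by_contra hne
    obtain ⟨e_w, hewT, hew⟩ := htreeEdge w hwr
    have hew_cross : crossesC ends S e_w := by
      rcases hew with h | h <;> simp only [crossesC, h, ne_eq, eq_iff_iff]
      · exact hne
      · exact fun h' => hne h'.symm
    have heq : e_w = e_v := (hcross_unique e_w hewT hew_cross).trans hev_eq.symm
    rw [heq] at hew
    rcases hew with h | h <;> rcases hev with h' | h' <;> rw [h'] at h <;>
      rw [Prod.mk.injEq] at h <;> obtain ⟨ha, hb⟩ := h
    · exact hwv ha.symm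
    · exact hnocyc 2 (by norm_num) (by show parent (parent v) = v; rw [ha, ← hb])
    · exact hnocyc 2 (by norm_num) (by show parent (parent v) = v; rw [hb, ← ha])
    · exact hwv hb.symm
  -- membership along chains avoiding v
  have chain : ∀ (k : ℕ) (u : V), (∀ j < k, parent^[j] u ≠ v) → ((u ∈ S) ↔ (parent^[k] u ∈ S)) := by
    intro k
    induction k with
    | zero => intro u _; simp
    | succ k ih =>
      intro u hj
      have h0 : u ≠ v := by simpa using hj 0 (Nat.succ_pos k)
      rw [Function.iterate_succ_apply]
      exact (H u h0).trans (ih (parent u) (fun j hjk => by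
        have := hj (j + 1) (Nat.succ_lt_succ hjk)
        rwa [Function.iterate_succ_apply] at this))
  have in_desc : ∀ u ∈ desc parent v, ((u ∈ S) ↔ (v ∈ S)) := by
    intro u hu
    simp only [desc, Finset.mem_filter, Finset.mem_univ, true_and] at hu
    have hP : ∃ k, parent^[k] u = v := hu
    have := chain (Nat.find hP) u (fun j hj => Nat.find_min hP hj)
    rwa [Nat.find_spec hP] at this
  have out_desc : ∀ u : V, u ∉ desc parent v → ((u ∈ S) ↔ (r ∈ S)) := by
    intro u hu
    simp only [desc, Finset.mem_filter, Finset.mem_univ, true_and, not_exists] at hu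
    obtain ⟨k, hk⟩ := hreach u
    have := chain k u (fun j _ => hu j)
    rwa [hk] at this
  have hpv_notdesc : parent v ∉ desc parent v := by
    simp only [desc, Finset.mem_filter, Finset.mem_univ, true_and, not_exists]
    intro k hk
    exact hnocyc (k + 1) (Nat.succ_pos k) (by rwa [Function.iterate_succ_apply])
  have hr_notdesc : ∀ w : V, w ≠ r → r ∉ desc parent w := by
    intro w hw
    simp only [desc, Finset.mem_filter, Finset.mem_univ, true_and, not_exists]
    intro k hk
    rw [Function.iterate_fixed hroot] at hk
    exact hw hk.symm
  have hpv_r : (parent v ∈ S) ↔ (r ∈ S) := out_desc _ hpv_notdesc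
  -- the main dichotomy
  have hmain : desc parent v = S ∨ desc parent v = Sᶜ := by
    by_cases hvS : v ∈ S
    · left
      have hrS : r ∉ S := fun h => hv ⟨fun _ => hpv_r.mpr h, fun _ => hvS⟩
      ext u
      constructor
      · intro hu; exact (in_desc u hu).mpr hvS
      · intro hu
        by_contra hnd
        exact hrS ((out_desc u hnd).mp hu)
    · right
      have hrS : r ∈ S := by
        by_contra hrS
        exact hv ⟨fun h => absurd h hvS, fun h => absurd (hpv_r.mp h) hrS⟩
      ext u
      simp only [Finset.mem_compl]
      constructor
      · intro hu hS'; exact hvS ((in_desc u hu).mp hS')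
      · intro hu
        by_contra hnd
        exact hu ((out_desc u hnd).mpr hrS)
  -- cut weight is invariant under complement
  have hcompl : cutW ends Sᶜ = cutW ends S := by
    unfold cutW cutEdges
    congr 1
    apply Finset.filter_congr
    intro e _
    simp only [crossesC, Finset.mem_compl, ne_eq, eq_iff_iff]
    tauto
  have hvr' : v ≠ r := hvr
  refine ⟨⟨v, hmain⟩, ⟨v, hvr', ?_⟩, ?_⟩
  · rcases hmain with h | h <;> rw [h]
    · exact hSmin
    · rw [hcompl]; exact hSmin
  · intro w hw
    apply hlam.2
    · exact ⟨w, by simp only [desc, Finset.mem_filter, Finset.mem_univ, true_and]; exact ⟨0, rfl⟩⟩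
    · intro h
      exact hr_notdesc w hw (h ▸ Finset.mem_univ r)
end

section
/- Let G = (V,E) be a finite connected multigraph with n = |V| vertices and minimum cut λ, T a multiset of spanning trees with relative loads ℓ^T, and l_a > 0 a threshold such that every edge e crossing between distinct components of (V, E_{<l_a}) satisfies ℓ^T(e) ≥ (1−2ε')/pack_val(T), where 0 < ε' < 1/2 and 2/λ ≤ 1/pack_val(T). If (V, E_{<l_a}) has more than (1−ε')·n components, then the smallest cut induced by a single component has weight at most λ/((1−2ε')(1−ε')). -/
open Finset MeasureTheory ProbabilityTheory
open scoped Classical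

variable {V E : Type*}

lemma sum_countP_eq [Fintype E] (s : Multiset (Finset E)) :
    ∑ e : E, s.countP (fun T => e ∈ T) = (s.map Finset.card).sum := by
  induction s using Multiset.induction with
  | empty => simp
  | cons T s ih =>
    simp only [Multiset.countP_cons, Multiset.map_cons, Multiset.sum_cons,
      Finset.sum_add_distrib, ih]
    rw [add_comm]
    congr 1
    simp [Finset.sum_ite_mem]

/-- if `(V, E_{<l_a})` has more than `(1−ε')n` components, the smallest
cut induced by a single component has weight at most `λ/((1−2ε')(1−ε'))`. -/
theorem stmt14 [Fintype V] [Fintype E] [Nonempty E] (ends : E → V × V)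
    (lam : ℕ) (hlam : IsMinCutVal ends lam) (hlam0 : 0 < lam)
    (𝒯 : Multiset (Finset E)) (h𝒯 : 𝒯 ≠ 0) (htree : ∀ T ∈ 𝒯, IsSpanningTree ends T)
    (la : ℝ) (hla : 0 < la) (ε' : ℝ) (hε0 : 0 < ε') (hε1 : ε' < 1 / 2)
    (comp : V → V)
    (hcomp : ∀ u v : V, comp u = comp v ↔ EdgeConn ends {e | relLoad 𝒯 e < la} u v)
    (hload : ∀ e : E, comp (ends e).1 ≠ comp (ends e).2 →
        (1 - 2 * ε') / packVal 𝒯 ≤ relLoad 𝒯 e)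
    (hpv : 2 / (lam : ℝ) ≤ 1 / packVal 𝒯)
    (hcount : (1 - ε') * (Fintype.card V : ℝ) < ((Finset.univ.image comp).card : ℝ)) :
    ∃ u : V, (cutW ends (Finset.univ.filter (fun x => comp x = comp u)) : ℝ)
        ≤ (lam : ℝ) / ((1 - 2 * ε') * (1 - ε')) := by
  have hV : Nonempty V := ⟨(ends (Classical.arbitrary E)).1⟩
  have hm0 : 0 < Multiset.card 𝒯 := Multiset.card_pos.mpr h𝒯
  have hload0 : ∀ e : E, 0 ≤ relLoad 𝒯 e := fun e => by
    unfold relLoad; positivity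
  have hmlle : ∀ e : E, relLoad 𝒯 e ≤ maxLoad 𝒯 := fun e =>
    Finset.le_sup' _ (Finset.mem_univ e)
  have hml0 : 0 ≤ maxLoad 𝒯 := le_trans (hload0 (Classical.arbitrary E)) (hmlle _)
  have hlamR : (0:ℝ) < lam := by exact_mod_cast hlam0
  have hpvne : maxLoad 𝒯 ≠ 0 := by
    intro h
    rw [packVal, h] at hpv
    simp at hpv
    have : (0:ℝ) < 2 / (lam:ℝ) := by positivity
    linarith
  have hmlpos : 0 < maxLoad 𝒯 := lt_of_le_of_ne hml0 (Ne.symm hpvne)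
  have hinv : 1 / packVal 𝒯 = maxLoad 𝒯 := by
    rw [packVal, one_div_one_div]
  have hL : 2 / (lam:ℝ) ≤ maxLoad 𝒯 := hinv ▸ hpv
  -- sum of loads bounded by n
  have hsumN : ∑ e : E, 𝒯.countP (fun T => e ∈ T) ≤ Multiset.card 𝒯 * Fintype.card V := by
    rw [sum_countP_eq]
    calc (𝒯.map Finset.card).sum
        ≤ (Multiset.card (𝒯.map Finset.card)) • Fintype.card V := by
          apply Multiset.sum_le_card_nsmul
          intro x hx
          rcases Multiset.mem_map.mp hx with ⟨T, hT, rfl⟩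
          rw [(htree T hT).2]
          omega
      _ = Multiset.card 𝒯 * Fintype.card V := by simp [smul_eq_mul]
  have hsumR : ∑ e : E, relLoad 𝒯 e ≤ (Fintype.card V : ℝ) := by
    unfold relLoad
    rw [← Finset.sum_div, div_le_iff₀ (by exact_mod_cast hm0)]
    have h1 : (∑ e : E, (𝒯.countP (fun T => e ∈ T) : ℝ))
        ≤ (Multiset.card 𝒯 : ℝ) * (Fintype.card V : ℝ) := by exact_mod_cast hsumN
    linarith [h1]
  set C : Finset E := Finset.univ.filter (fun e => comp (ends e).1 ≠ comp (ends e).2) with hC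
  have hcard : (C.card : ℝ) * ((1 - 2*ε') * maxLoad 𝒯) ≤ (Fintype.card V : ℝ) := by
    have h1 : ∀ e ∈ C, (1 - 2*ε') * maxLoad 𝒯 ≤ relLoad 𝒯 e := by
      intro e he
      have h2 := hload e (by simpa [hC] using he)
      rwa [div_eq_mul_one_div, hinv] at h2
    calc (C.card : ℝ) * ((1 - 2*ε') * maxLoad 𝒯)
        ≤ ∑ e ∈ C, relLoad 𝒯 e := by
          simpa [nsmul_eq_mul] using Finset.card_nsmul_le_sum C _ _ h1
      _ ≤ ∑ e : E, relLoad 𝒯 e :=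
          Finset.sum_le_sum_of_subset_of_nonneg (Finset.subset_univ C)
            (fun e _ _ => hload0 e)
      _ ≤ (Fintype.card V : ℝ) := hsumR
  set I : Finset V := Finset.univ.image comp with hI
  have hIne : I.Nonempty :=
    ⟨comp (Classical.arbitrary V), Finset.mem_image_of_mem _ (Finset.mem_univ _)⟩
  have hmem : ∀ (w x : V), x ∈ Finset.univ.filter (fun y => comp y = w) ↔ comp x = w := by
    intro w x; simp
  have hsum2 : ∑ w ∈ I, cutW ends (Finset.univ.filter (fun x => comp x = w)) = 2 * C.card := by
    calc ∑ w ∈ I, cutW ends (Finset.univ.filter (fun x => comp x = w))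
        = ∑ w ∈ I, ∑ e : E,
            (if crossesC ends (Finset.univ.filter (fun x => comp x = w)) e then 1 else 0) := by
          refine Finset.sum_congr rfl fun w _ => ?_
          rw [cutW, cutEdges, Finset.card_filter]
      _ = ∑ e : E, ∑ w ∈ I,
            (if crossesC ends (Finset.univ.filter (fun x => comp x = w)) e then 1 else 0) :=
          Finset.sum_comm
      _ = ∑ e : E, (if comp (ends e).1 ≠ comp (ends e).2 then 2 else 0) := by
          refine Finset.sum_congr rfl fun e _ => ?_
          have hcr : ∀ w, crossesC ends (Finset.univ.filter (fun x => comp x = w)) e ↔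
              ¬((comp (ends e).1 = w) ↔ (comp (ends e).2 = w)) := by
            intro w
            rw [crossesC, ne_eq, eq_iff_iff]
            constructor
            · intro h h2; exact h (by rw [hmem, hmem]; exact h2)
            · intro h h2; exact h (by rwa [hmem, hmem] at h2)
          by_cases hab : comp (ends e).1 = comp (ends e).2
          · simp [hab, hcr]
          · rw [if_pos hab]
            rw [← Finset.card_filter]
            have hfil : I.filter
                (fun w => crossesC ends (Finset.univ.filter (fun x => comp x = w)) e)
                = {comp (ends e).1, comp (ends e).2} := by
              ext w
              simp only [Finset.mem_filter, hcr, Finset.mem_insert, Finset.mem_singleton, hI,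
                Finset.mem_image, Finset.mem_univ, true_and]
              constructor
              · rintro ⟨-, h⟩
                by_contra hcon
                push_neg at hcon
                exact h ⟨fun h1 => absurd h1.symm hcon.1, fun h2 => absurd h2.symm hcon.2⟩
              · rintro (rfl | rfl)
                · exact ⟨⟨(ends e).1, rfl⟩, fun h => hab (h.mp rfl).symm⟩
                · exact ⟨⟨(ends e).2, rfl⟩, fun h => hab (h.mpr rfl)⟩
            rw [hfil, Finset.card_pair hab]
      _ = 2 * C.card := by
          rw [← Finset.sum_filter, Finset.sum_const, smul_eq_mul, ← hC, mul_comm]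
  have hn'pos : (0:ℝ) < I.card := by exact_mod_cast Finset.card_pos.mpr hIne
  have havg : ∃ w ∈ I, (cutW ends (Finset.univ.filter (fun x => comp x = w)) : ℝ)
      ≤ 2 * (C.card : ℝ) / (I.card : ℝ) := by
    apply Finset.exists_le_of_sum_le hIne
    rw [Finset.sum_const, nsmul_eq_mul, mul_div_cancel₀ _ (ne_of_gt hn'pos)]
    have : (∑ w ∈ I, (cutW ends (Finset.univ.filter (fun x => comp x = w)) : ℝ))
        = 2 * (C.card : ℝ) := by exact_mod_cast hsum2
    rw [this]
  obtain ⟨w, hwI, hw⟩ := havg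
  obtain ⟨u, -, rfl⟩ := Finset.mem_image.mp hwI
  refine ⟨u, le_trans hw ?_⟩
  have hε2 : (0:ℝ) < 1 - 2*ε' := by linarith
  have hε3 : (0:ℝ) < 1 - ε' := by linarith
  -- 2 * C.card * (1 - 2ε') ≤ n * lam
  have key : 2 * (C.card : ℝ) * (1 - 2*ε') ≤ (Fintype.card V : ℝ) * lam := by
    have hc0 : (0:ℝ) ≤ (C.card : ℝ) := by positivity
    have h2 : (C.card : ℝ) * ((1 - 2*ε') * (2 / (lam:ℝ))) ≤ (Fintype.card V : ℝ) := by
      calc (C.card : ℝ) * ((1 - 2*ε') * (2 / (lam:ℝ)))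
          ≤ (C.card : ℝ) * ((1 - 2*ε') * maxLoad 𝒯) := by
            apply mul_le_mul_of_nonneg_left _ hc0
            exact mul_le_mul_of_nonneg_left hL (le_of_lt hε2)
        _ ≤ (Fintype.card V : ℝ) := hcard
    rw [div_eq_mul_inv] at h2
    have := mul_le_mul_of_nonneg_right h2 (le_of_lt hlamR)
    calc 2 * (C.card : ℝ) * (1 - 2*ε')
        = (C.card : ℝ) * ((1 - 2*ε') * (2 * (lam:ℝ)⁻¹)) * lam := by
          field_simp
      _ ≤ (Fintype.card V : ℝ) * lam := this
  rw [div_le_div_iff₀ hn'pos (by positivity)]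
  have hcount' : (lam:ℝ) * ((1 - ε') * (Fintype.card V : ℝ)) ≤ (lam:ℝ) * (I.card : ℝ) :=
    mul_le_mul_of_nonneg_left (le_of_lt hcount) (le_of_lt hlamR)
  have key2 : 2 * (C.card : ℝ) * (1 - 2*ε') * (1 - ε')
      ≤ (Fintype.card V : ℝ) * lam * (1 - ε') :=
    mul_le_mul_of_nonneg_right key (le_of_lt hε3)
  nlinarith [key2, hcount']
end

section
/- Let P be a partition of the vertex set of a finite connected multigraph G into k ≥ 2 parts, and suppose G contains |E(G/P)| edge-disjoint spanning trees after each edge is duplicated k−1 times (as guaranteed by Nash-Williams–Tutte when P is an optimal partition). Then assigning each such tree weight 1/(k−1) yields a fractional tree packing of G of total value |E(G/P)|/(k−1) in which every edge has relative load at most 1. Consequently max_T pack_val(T) ≥ min_P part_val(P), and combined with weak duality, max_T pack_val(T) = min_P part_val(P). -/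
open Finset MeasureTheory ProbabilityTheory
open scoped Classical

variable {V E : Type*}

/-- `x` is the value of some fractional tree packing of the multigraph. -/
def IsFracPackingVal [Fintype V] [Fintype E] (ends : E → V × V) (x : ℝ) : Prop :=
  ∃ (m : ℕ) (S : Fin m → Finset E) (w : Fin m → ℝ),
    (∀ j, IsSpanningTree ends (S j)) ∧ (∀ j, 0 ≤ w j) ∧
    (∀ e : E, ∑ j ∈ Finset.univ.filter (fun j => e ∈ S j), w j ≤ 1) ∧
    x = ∑ j, w j

/-!
Projecting the trees of the duplicated graph to `G` keeps them connecting, and a connected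
spanning edge set has at least `|V| - 1` edges, so the projections are spanning trees of `G`;
an edge of `G` lies in at most one of them per copy, i.e. in at most `k - 1`. Weight `1/(k-1)`
on each gives a packing of value `|E(G/P)|/(k-1) = Φ`. Conversely, a spanning tree connects the
graph contracted along any partition `Q`, so it uses at least `|Q| - 1` edges of `G/Q`; double
counting then bounds every packing value by `part_val(Q)`.
-/

section ContractGraph

variable {Q : Type*}

def contractGraph (ends : E → V × V) (π : V → Q) (F : Finset E) : SimpleGraph Q :=
  SimpleGraph.fromRel fun x y => ∃ e ∈ F, π (ends e).1 = x ∧ π (ends e).2 = y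

variable {ends : E → V × V} {π : V → Q} {F : Finset E}

lemma EdgeConn.reachable_contractGraph {a b : V} (h : EdgeConn ends (↑F) a b) :
    (contractGraph ends π F).Reachable (π a) (π b) := by
  induction h with
  | refl => rfl
  | @tail y z _ hyz ih =>
    obtain ⟨e, he, hyz⟩ := hyz
    refine ih.trans ?_
    by_cases hne : π y = π z
    · rw [hne]
    · refine SimpleGraph.Adj.reachable ⟨hne, ?_⟩
      rcases hyz with h | h
      · exact Or.inl ⟨e, he, by simp [h]⟩
      · exact Or.inr ⟨e, he, by simp [h]⟩

lemma card_edgeFinset_contractGraph_le [Fintype Q] :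
    (contractGraph ends π F).edgeFinset.card ≤
      (F.filter fun e => π (ends e).1 ≠ π (ends e).2).card := by
  refine (Finset.card_le_card fun s hs => ?_).trans
    (Finset.card_image_le (f := fun e => s(π (ends e).1, π (ends e).2)))
  induction s using Sym2.ind with
  | _ x y =>
    obtain ⟨hne, ⟨e, he, rfl, rfl⟩ | ⟨e, he, rfl, rfl⟩⟩ := by simpa using hs
    · exact Finset.mem_image.mpr ⟨e, Finset.mem_filter.mpr ⟨he, hne⟩, rfl⟩
    · exact Finset.mem_image.mpr ⟨e, Finset.mem_filter.mpr ⟨he, Ne.symm hne⟩, Sym2.eq_swap⟩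

lemma card_sub_one_le_card_filter_ne [Fintype Q] (hπ : Function.Surjective π)
    (hF : ∀ a b : V, EdgeConn ends (↑F) a b) :
    Fintype.card Q - 1 ≤ (F.filter fun e => π (ends e).1 ≠ π (ends e).2).card := by
  cases isEmpty_or_nonempty Q with
  | inl _ => simp
  | inr _ =>
    have hconn : (contractGraph ends π F).Connected := by
      refine SimpleGraph.Connected.mk fun x y => ?_
      obtain ⟨a, rfl⟩ := hπ x
      obtain ⟨b, rfl⟩ := hπ y
      exact EdgeConn.reachable_contractGraph (hF a b)
    have hvert := hconn.card_vert_le_card_edgeSet_add_one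
    rw [Nat.card_eq_fintype_card, Nat.card_eq_fintype_card, ← SimpleGraph.edgeFinset_card] at hvert
    have hedge := card_edgeFinset_contractGraph_le (ends := ends) (π := π) (F := F)
    omega

lemma card_sub_one_le_card_of_forall_edgeConn [Fintype V]
    (hF : ∀ a b : V, EdgeConn ends (↑F) a b) :
    Fintype.card V - 1 ≤ F.card :=
  (card_sub_one_le_card_filter_ne (π := id) Function.surjective_id hF).trans
    (Finset.card_filter_le _ _)

lemma IsSpanningTree.image [Fintype V] {E' : Type*} (f : E' → E) {T : Finset E'}
    (hT : IsSpanningTree (ends ∘ f) T) : IsSpanningTree ends (T.image f) := by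
  have hconn : ∀ a b : V, EdgeConn ends ↑(T.image f) a b := fun a b =>
    Relation.ReflTransGen.mono (fun _ _ ⟨d, hd, h⟩ => ⟨f d, by simpa using ⟨d, hd, rfl⟩, h⟩) a b
      (hT.1 a b)
  refine ⟨hconn, le_antisymm ?_ (card_sub_one_le_card_of_forall_edgeConn hconn)⟩
  exact hT.2 ▸ Finset.card_image_le

end ContractGraph

namespace IsPartition

variable [Fintype V] {P : Finset (Finset V)} (hP : IsPartition P)

noncomputable def part (v : V) : P :=
  ⟨(hP.2 v).choose, (hP.2 v).choose_spec.1.1⟩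

lemma mem_part (v : V) : v ∈ (hP.part v : Finset V) :=
  (hP.2 v).choose_spec.1.2

lemma part_eq {v : V} {S : Finset V} (hS : S ∈ P) (hv : v ∈ S) : (hP.part v : Finset V) = S :=
  ((hP.2 v).choose_spec.2 S ⟨hS, hv⟩).symm

lemma part_surjective : Function.Surjective hP.part := fun ⟨S, hS⟩ =>
  let ⟨v, hv⟩ := hP.1 S hS
  ⟨v, Subtype.ext (hP.part_eq hS hv)⟩

lemma crossesP_iff (ends : E → V × V) (e : E) :
    crossesP ends P e ↔ hP.part (ends e).1 ≠ hP.part (ends e).2 := by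
  refine ⟨fun hc heq => hc _ (hP.part (ends e).1).2 ⟨hP.mem_part _, heq ▸ hP.mem_part _⟩,
    fun hne S hS ⟨h1, h2⟩ => hne (Subtype.ext ?_)⟩
  rw [hP.part_eq hS h1, hP.part_eq hS h2]

end IsPartition

lemma IsSpanningTree.card_sub_one_le_card_filter_crossesP [Fintype V] {ends : E → V × V}
    {T : Finset E} (hT : IsSpanningTree ends T) {P : Finset (Finset V)} (hP : IsPartition P) :
    P.card - 1 ≤ (T.filter (crossesP ends P)).card := by
  simpa [Fintype.card_coe, hP.crossesP_iff] using
    card_sub_one_le_card_filter_ne hP.part_surjective hT.1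

open Function in
lemma card_filter_mem_image_fst_le {ι α β : Type*} [Fintype ι] [Fintype β] [DecidableEq α]
    {T : ι → Finset (α × β)} (hT : Pairwise (Disjoint on T)) (a : α) :
    (Finset.univ.filter fun j => a ∈ (T j).image Prod.fst).card ≤ Fintype.card β := by
  refine Finset.card_le_card_of_forall_subsingleton (fun j b => (a, b) ∈ T j) ?_ ?_
  · intro j hj
    obtain ⟨d, hd, rfl⟩ := Finset.mem_image.mp (Finset.mem_filter.mp hj).2
    exact ⟨d.2, Finset.mem_univ _, hd⟩
  · intro b _ i ⟨_, hi⟩ j ⟨_, hj⟩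
    by_contra hij
    exact Finset.disjoint_left.mp (hT hij) hi hj

lemma sum_mul_card_filter_le_card {ι : Type*} [Fintype ι] {w : ι → ℝ} {T : ι → Finset E}
    (hw : ∀ e, ∑ j ∈ Finset.univ.filter (fun j => e ∈ T j), w j ≤ 1) (A : Finset E) :
    ∑ j, w j * (A.filter (· ∈ T j)).card ≤ A.card := by
  calc ∑ j, w j * (A.filter (· ∈ T j)).card
      = ∑ e ∈ A, ∑ j ∈ Finset.univ.filter (fun j => e ∈ T j), w j := by
        simp only [Finset.card_filter, Nat.cast_sum, Finset.mul_sum, Finset.sum_filter]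
        rw [Finset.sum_comm]
        simp [mul_ite]
    _ ≤ ∑ _e ∈ A, 1 := Finset.sum_le_sum fun e _ => hw e
    _ = A.card := by simp

lemma IsFracPackingVal.le_partVal [Fintype V] [Fintype E] {ends : E → V × V} {x : ℝ}
    (hx : IsFracPackingVal ends x) {P : Finset (Finset V)} (hP : IsPartition P)
    (hP2 : 2 ≤ P.card) : x ≤ partVal ends P := by
  obtain ⟨n, T, w, hT, hw, hl, rfl⟩ := hx
  have hcross : ∀ j, (T j).filter (crossesP ends P) =
      (crossEdgesP ends P).filter (· ∈ T j) := fun j => by ext; simp [crossEdgesP, and_comm]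
  have hP2' : (2 : ℝ) ≤ P.card := by exact_mod_cast hP2
  rw [partVal, le_div_iff₀ (by linarith)]
  calc (∑ j, w j) * ((P.card : ℝ) - 1) = ∑ j, w j * ((P.card - 1 : ℕ) : ℝ) := by
        rw [Finset.sum_mul, Nat.cast_sub (by omega), Nat.cast_one]
    _ ≤ ∑ j, w j * ((crossEdgesP ends P).filter (· ∈ T j)).card := by
        gcongr with j
        · exact hw j
        · rw [← hcross]
          exact_mod_cast (hT j).card_sub_one_le_card_filter_crossesP hP
    _ ≤ (crossEdgesP ends P).card := sum_mul_card_filter_le_card hl _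

theorem stmt18_general [Fintype V] [Fintype E] (ends : E → V × V)
    (P : Finset (Finset V)) (hP : IsPartition P) (k : ℕ) (hk : P.card = k) (hk2 : 2 ≤ k)
    (Phi : ℝ) (hopt : partVal ends P = Phi)
    (m : ℕ) (hm : m = (crossEdgesP ends P).card)
    (Td : Fin m → Finset (E × Fin (k - 1)))
    (hTd : ∀ j, IsSpanningTree (fun d : E × Fin (k - 1) => ends d.1) (Td j))
    (hdisj : ∀ i j, i ≠ j → Disjoint (Td i) (Td j)) :
    (∃ S : Fin m → Finset E,
      (∀ j, IsSpanningTree ends (S j)) ∧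
      (∀ e : E, ((Finset.univ.filter (fun j => e ∈ S j)).card : ℝ) * (1 / ((k : ℝ) - 1)) ≤ 1) ∧
      (∑ _j : Fin m, (1 : ℝ) / ((k : ℝ) - 1)) = (m : ℝ) / ((k : ℝ) - 1)) ∧
    IsGreatest {x : ℝ | IsFracPackingVal ends x} Phi := by
  set S : Fin m → Finset E := fun j => (Td j).image Prod.fst
  have hS : ∀ j, IsSpanningTree ends (S j) := fun j => (hTd j).image Prod.fst
  have hk1 : (0 : ℝ) < (k : ℝ) - 1 := by
    have : (2 : ℝ) ≤ k := by exact_mod_cast hk2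
    linarith
  have hload : ∀ e : E,
      ((Finset.univ.filter (fun j => e ∈ S j)).card : ℝ) * (1 / ((k : ℝ) - 1)) ≤ 1 := by
    intro e
    rw [mul_one_div, div_le_one hk1, ← Nat.cast_pred (by omega)]
    exact_mod_cast (card_filter_mem_image_fst_le hdisj e).trans_eq (Fintype.card_fin _)
  have hsum : (∑ _j : Fin m, (1 : ℝ) / ((k : ℝ) - 1)) = (m : ℝ) / ((k : ℝ) - 1) := by
    simp [div_eq_mul_inv]
  have hPhi : Phi = (m : ℝ) / ((k : ℝ) - 1) := by rw [← hopt, partVal, hm, hk]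
  refine ⟨⟨S, hS, hload, hsum⟩, ⟨m, S, fun _ => 1 / ((k : ℝ) - 1), hS, fun _ => by positivity,
    fun e => by simpa using hload e, by rw [hPhi, hsum]⟩,
    fun x hx => hopt ▸ hx.le_partVal hP (hk ▸ hk2)⟩

/-- from `|E(G/P)|` edge-disjoint spanning trees of the `(k−1)`-fold
duplicated graph one gets a fractional packing of value `|E(G/P)|/(k−1)` with all
relative loads at most 1; consequently (with weak duality)
`max_T pack_val(T) = min_P part_val(P) = Φ`. -/
theorem stmt18 [Fintype V] [Fintype E] (ends : E → V × V) (hG : GConn ends)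
    (P : Finset (Finset V)) (hP : IsPartition P) (k : ℕ) (hk : P.card = k) (hk2 : 2 ≤ k)
    (Phi : ℝ) (hopt : partVal ends P = Phi)
    (hPhi : ∀ Q : Finset (Finset V), IsPartition Q → 2 ≤ Q.card → Phi ≤ partVal ends Q)
    (m : ℕ) (hm : m = (crossEdgesP ends P).card)
    (Td : Fin m → Finset (E × Fin (k - 1)))
    (hTd : ∀ j, IsSpanningTree (fun d : E × Fin (k - 1) => ends d.1) (Td j))
    (hdisj : ∀ i j, i ≠ j → Disjoint (Td i) (Td j)) :
    (∃ S : Fin m → Finset E,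
      (∀ j, IsSpanningTree ends (S j)) ∧
      (∀ e : E, ((Finset.univ.filter (fun j => e ∈ S j)).card : ℝ) * (1 / ((k : ℝ) - 1)) ≤ 1) ∧
      (∑ _j : Fin m, (1 : ℝ) / ((k : ℝ) - 1)) = (m : ℝ) / ((k : ℝ) - 1)) ∧
    IsGreatest {x : ℝ | IsFracPackingVal ends x} Phi :=
  stmt18_general ends P hP k hk hk2 Phi hopt m hm Td hTd hdisj
end
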